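/- For all integers d ≥ 2, m ≥ 1, n with η = n/m ≥ 6 when m=1 and η ≥ 4 when m ≥ 2, and all integers ζ ≥ 2: (2d^m/(d^{2m}+1))^{2^ζ} ≤ (d^m/(d^{2m}+1))² · (2 + 2·cos(2π/η)). -/

import Mathlib

/-!
Put `t = d ^ m` and `x = t / (t² + 1)`. By AM–GM `2x ≤ 1`, so raising `2x` to the power
`2 ^ ζ ≥ 4` only decreases it, and it suffices to show `16 x² ≤ 2 + 2 cos (2π / η)`.
Since `t ↦ t / (t² + 1)` decreases on `[1, ∞)`, for `m = 1` we have `t ≥ 2`, `x ≤ 2/5` and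
`cos (2π / η) ≥ cos (π / 3) = 1/2`, while for `m ≥ 2` we have `t ≥ 4`, `x ≤ 4/17` and
`cos (2π / η) ≥ cos (π / 2) = 0`.
-/

open Real

lemma two_mul_div_sq_add_one_le_one (t : ℝ) : 2 * (t / (t ^ 2 + 1)) ≤ 1 := by
  rw [← mul_div_assoc, div_le_one (by positivity)]
  nlinarith [sq_nonneg (t - 1)]

lemma div_sq_add_one_le_of_le {a t : ℝ} (ha : 1 ≤ a) (hat : a ≤ t) :
    t / (t ^ 2 + 1) ≤ a / (a ^ 2 + 1) := by
  rw [div_le_div_iff₀ (by positivity) (by positivity)]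
  have hat1 : 1 ≤ a * t := by nlinarith
  -- `a (t² + 1) - t (a² + 1) = (t - a) (a t - 1)`
  nlinarith [mul_nonneg (sub_nonneg.mpr hat) (sub_nonneg.mpr hat1)]

lemma cos_two_pi_div_le_cos_two_pi_div {a b : ℝ} (ha : 2 ≤ a) (hab : a ≤ b) :
    cos (2 * π / a) ≤ cos (2 * π / b) := by
  apply cos_le_cos_of_nonneg_of_le_pi (div_nonneg (by positivity) (by linarith))
  · rw [div_le_iff₀ (by linarith)]
    nlinarith [pi_pos]
  · exact div_le_div_of_nonneg_left (by positivity) (by linarith) hab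

lemma pow_two_pow_le_sq_mul {x c : ℝ} {ζ : ℕ} (hx : 0 ≤ x) (hx1 : 2 * x ≤ 1)
    (hc : 16 * x ^ 2 ≤ c) (hζ : 2 ≤ ζ) : (2 * x) ^ 2 ^ ζ ≤ x ^ 2 * c :=
  calc (2 * x) ^ 2 ^ ζ ≤ (2 * x) ^ 4 :=
        pow_le_pow_of_le_one (by positivity) hx1
          (by simpa using Nat.pow_le_pow_right two_pos hζ)
    _ = x ^ 2 * (16 * x ^ 2) := by ring
    _ ≤ x ^ 2 * c := by gcongr

theorem stmt_7_general (d m η ζ : ℕ) (hd : 2 ≤ d) (hm : 1 ≤ m)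
    (hη4 : 4 ≤ η) (hη6 : m = 1 → 6 ≤ η) (hζ : 2 ≤ ζ) :
    (2 * (d : ℝ) ^ m / ((d : ℝ) ^ (2 * m) + 1)) ^ (2 ^ ζ) ≤
      ((d : ℝ) ^ m / ((d : ℝ) ^ (2 * m) + 1)) ^ 2 *
        (2 + 2 * Real.cos (2 * Real.pi / (η : ℝ))) := by
  have hd2 : (2 : ℝ) ≤ d := by exact_mod_cast hd
  have hsq : (d : ℝ) ^ (2 * m) = ((d : ℝ) ^ m) ^ 2 := by rw [mul_comm, pow_mul]
  rw [hsq, mul_div_assoc]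
  refine pow_two_pow_le_sq_mul (by positivity) (two_mul_div_sq_add_one_le_one _) ?_ hζ
  rcases hm.eq_or_lt with rfl | hm2
  · have hcos : 1 / 2 ≤ cos (2 * π / η) := by
      have hη6' : (6 : ℝ) ≤ η := by exact_mod_cast hη6 rfl
      have := cos_two_pi_div_le_cos_two_pi_div (by norm_num) hη6'
      rwa [show 2 * π / 6 = π / 3 by ring, cos_pi_div_three] at this
    have hx := div_sq_add_one_le_of_le (by norm_num) (hd2.trans_eq (pow_one _).symm)
    have hx2 := pow_le_pow_left₀ (by positivity) hx 2
    norm_num at hx2 ⊢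
    linarith
  · have hcos : 0 ≤ cos (2 * π / η) := by
      have hη4' : (4 : ℝ) ≤ η := by exact_mod_cast hη4
      have := cos_two_pi_div_le_cos_two_pi_div (by norm_num) hη4'
      rwa [show 2 * π / 4 = π / 2 by ring, cos_pi_div_two] at this
    have ht : (2 : ℝ) ^ 2 ≤ (d : ℝ) ^ m :=
      (pow_le_pow_right₀ one_le_two hm2).trans (pow_le_pow_left₀ zero_le_two hd2 m)
    have hx := div_sq_add_one_le_of_le (by norm_num) ht
    have hx2 := pow_le_pow_left₀ (by positivity) hx 2
    norm_num at hx2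
    linarith

theorem stmt_7 (d m η ζ : ℕ) (hd : 2 ≤ d) (hm : 1 ≤ m)
    (hη : Even η) (hη4 : 4 ≤ η) (hη6 : m = 1 → 6 ≤ η) (hζ : 2 ≤ ζ) :
    (2 * (d : ℝ) ^ m / ((d : ℝ) ^ (2 * m) + 1)) ^ (2 ^ ζ) ≤
      ((d : ℝ) ^ m / ((d : ℝ) ^ (2 * m) + 1)) ^ 2 *
        (2 + 2 * Real.cos (2 * Real.pi / (η : ℝ))) :=
  stmt_7_general d m η ζ hd hm hη4 hη6 hζ
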